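/- arXiv:2411.02872 — 3 statements merged into one kernel-verified Lean document; each statement's English description precedes it below -/
import Mathlib

section
/- Let α : [0,T) → ℝ be continuously differentiable with α(t) > 0 and α'(t) ≤ 0 for all t. Let ρ₀ solve ρ₀'' + α ρ₀ = 0 with ρ₀(0)=1, ρ₀'(0)=0. Then for all t ∈ [0,T): |ρ₀(t)| ≤ √(α(0)/α(t)) and |ρ₀'(t)| ≤ √(α(0)). -/
/-!
Along a solution of `ρ'' + α ρ = 0` the energy `E = ρ'² + α ρ²` satisfies `E' = α' ρ²`, so it
decreases when `α' ≤ 0`. Hence `ρ'(t)² + α(t) ρ(t)² ≤ E(0) = α(0)`, and since both summands are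
nonnegative when `α > 0`, each is bounded by `α(0)`.
-/

open Set

section Energy

variable {α α' ρ ρ' : ℝ → ℝ}

theorem hasDerivAt_energy {t : ℝ} (hα : HasDerivAt α (α' t) t) (hρ : HasDerivAt ρ (ρ' t) t)
    (hρ' : HasDerivAt ρ' (-(α t * ρ t)) t) :
    HasDerivAt (fun s => ρ' s ^ 2 + α s * ρ s ^ 2) (α' t * ρ t ^ 2) t := by
  refine ((hρ'.pow 2).add (hα.mul (hρ.pow 2))).congr_deriv ?_
  simp only [Pi.pow_apply]
  ring

theorem antitoneOn_energy {D : Set ℝ} (hD : Convex ℝ D)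
    (hα : ∀ t ∈ D, HasDerivAt α (α' t) t) (hα' : ∀ t ∈ D, α' t ≤ 0)
    (hρ : ∀ t ∈ D, HasDerivAt ρ (ρ' t) t) (hρ' : ∀ t ∈ D, HasDerivAt ρ' (-(α t * ρ t)) t) :
    AntitoneOn (fun s => ρ' s ^ 2 + α s * ρ s ^ 2) D := by
  have hE : ∀ t ∈ D, HasDerivAt (fun s => ρ' s ^ 2 + α s * ρ s ^ 2) (α' t * ρ t ^ 2) t :=
    fun t ht => hasDerivAt_energy (hα t ht) (hρ t ht) (hρ' t ht)
  refine antitoneOn_of_hasDerivWithinAt_nonpos hD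
    (fun t ht => (hE t ht).continuousAt.continuousWithinAt)
    (fun t ht => (hE t (interior_subset ht)).hasDerivWithinAt) fun t ht => ?_
  exact mul_nonpos_of_nonpos_of_nonneg (hα' t (interior_subset ht)) (sq_nonneg _)

end Energy

/-- Energy bound for the solution ρ₀ of ρ'' + α ρ = 0 with ρ₀(0)=1, ρ₀'(0)=0,
when α > 0 and α' ≤ 0. -/
theorem stmt_1 (T : ℝ) (hT : 0 < T) (α α' ρ₀ ρ₀' : ℝ → ℝ)
    (hα : ∀ t ∈ Set.Ico (0:ℝ) T, HasDerivAt α (α' t) t)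
    (hαpos : ∀ t ∈ Set.Ico (0:ℝ) T, 0 < α t)
    (hα' : ∀ t ∈ Set.Ico (0:ℝ) T, α' t ≤ 0)
    (hρ₀ : ∀ t ∈ Set.Ico (0:ℝ) T, HasDerivAt ρ₀ (ρ₀' t) t)
    (hρ₀' : ∀ t ∈ Set.Ico (0:ℝ) T, HasDerivAt ρ₀' (-(α t * ρ₀ t)) t)
    (h00 : ρ₀ 0 = 1) (h01 : ρ₀' 0 = 0) :
    ∀ t ∈ Set.Ico (0:ℝ) T,
      |ρ₀ t| ≤ Real.sqrt (α 0 / α t) ∧ |ρ₀' t| ≤ Real.sqrt (α 0) := by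
  intro t ht
  have h0 : (0 : ℝ) ∈ Ico 0 T := ⟨le_rfl, hT⟩
  have henergy : ρ₀' t ^ 2 + α t * ρ₀ t ^ 2 ≤ α 0 := by
    simpa [h00, h01] using antitoneOn_energy (convex_Ico 0 T) hα hα' hρ₀ hρ₀' h0 ht ht.1
  have hαt := hαpos t ht
  have hρ₀_sq : ρ₀ t ^ 2 ≤ α 0 / α t := by
    rw [le_div_iff₀ hαt]
    nlinarith [sq_nonneg (ρ₀' t)]
  have hρ₀'_sq : ρ₀' t ^ 2 ≤ α 0 := by
    nlinarith [mul_nonneg hαt.le (sq_nonneg (ρ₀ t))]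
  exact ⟨Real.abs_le_sqrt hρ₀_sq, Real.abs_le_sqrt hρ₀'_sq⟩
end

section
/- Let n ≥ 1, m ≥ 0, c > 0, H ∈ ℝ, σ ∈ ℝ, and let a be the FLRW scale function a(t) = a₀(1 + n(1+σ)Ht/2)^{2/(n(1+σ))} for σ ≠ −1 (a(t) = a₀ e^{Ht} for σ = −1). Define the curved mass by M²(t) = m² − (n(n−2)/(4c²))(ȧ/a)² − (n/(2c²))(ä/a). Then M²(t) = m² + σ (nH/(2c))² (1 + n(1+σ)Ht/2)^{−2} for all t in the domain of a. -/
/-!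
Both branches of the scale factor solve `ȧ = h a` with the Hubble rate
`h = H / (1 + n(1+σ)Ht/2)` (for `σ = -1` this is the constant `H`). Hence `ä / a = ḣ + h²`, so
`M² = m² - (n²/4c²) h² - (n/2c²) ḣ`, and since `ḣ = -(n(1+σ)/2) h²` this is
`m² + σ (nH/2c)² (1 + n(1+σ)Ht/2)⁻²`.
-/

open Filter Topology

theorem deriv_deriv_eq_of_hasDerivAt_mul {a h : ℝ → ℝ} {t h' : ℝ}
    (ha : ∀ᶠ s in 𝓝 t, HasDerivAt a (h s * a s) s) (hh : HasDerivAt h h' t) :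
    deriv (deriv a) t = (h' + h t ^ 2) * a t := by
  have hda : deriv a =ᶠ[𝓝 t] fun s => h s * a s := ha.mono fun s hs => hs.deriv
  rw [hda.deriv_eq]
  exact (hh.mul ha.self_of_nhds).deriv.trans (by ring)

/-- The Hubble rate `ȧ / a` of the FLRW scale factor, with `A = n (1 + σ)`. -/
noncomputable def hubbleRate (A H t : ℝ) : ℝ := H / (1 + A * H * t / 2)

theorem hasDerivAt_hubbleRate (A H t : ℝ) (ht : 1 + A * H * t / 2 ≠ 0) :
    HasDerivAt (hubbleRate A H) (-(A * H ^ 2 / 2) / (1 + A * H * t / 2) ^ 2) t := by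
  have hX : HasDerivAt (fun s => 1 + A * H * s / 2) (A * H / 2) t := by
    simpa using (((hasDerivAt_id t).const_mul (A * H)).div_const 2).const_add 1
  refine ((hX.inv ht).const_mul H).congr_deriv ?_
  field_simp

theorem hasDerivAt_flrwScale (n σ H a₀ : ℝ) (hn : n ≠ 0) {t : ℝ}
    (ht : 0 < 1 + n * (1 + σ) * H * t / 2) :
    HasDerivAt (fun s => if σ = -1 then a₀ * Real.exp (H * s)
        else a₀ * (1 + n * (1 + σ) * H * s / 2) ^ (2 / (n * (1 + σ))))
      (hubbleRate (n * (1 + σ)) H t * (if σ = -1 then a₀ * Real.exp (H * t)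
        else a₀ * (1 + n * (1 + σ) * H * t / 2) ^ (2 / (n * (1 + σ))))) t := by
  unfold hubbleRate
  by_cases hσ : σ = -1
  · subst hσ
    simp only [if_true]
    refine (((hasDerivAt_id t).const_mul H).exp.const_mul a₀).congr_deriv ?_
    norm_num
    ring
  · simp only [if_neg hσ]
    set A := n * (1 + σ)
    have hA : A ≠ 0 := mul_ne_zero hn fun h => hσ (by linarith)
    have hX : HasDerivAt (fun s => 1 + A * H * s / 2) (A * H / 2) t := by
      simpa using (((hasDerivAt_id t).const_mul (A * H)).div_const 2).const_add 1
    refine ((hX.rpow_const (p := 2 / A) (Or.inl ht.ne')).const_mul a₀).congr_deriv ?_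
    rw [Real.rpow_sub_one ht.ne']
    field_simp

theorem stmt_6_general (n : ℕ) (hn : 1 ≤ n) (m c H σ a₀ : ℝ) (hc : 0 < c)
    (ha₀ : 0 < a₀) (a Msq : ℝ → ℝ)
    (ha : ∀ t, a t =
      if σ = -1 then a₀ * Real.exp (H * t)
      else a₀ * (1 + (n:ℝ) * (1 + σ) * H * t / 2) ^ (2 / ((n:ℝ) * (1 + σ))))
    (hM : ∀ t, Msq t = m ^ 2
      - ((n:ℝ) * ((n:ℝ) - 2) / (4 * c ^ 2)) * (deriv a t / a t) ^ 2
      - ((n:ℝ) / (2 * c ^ 2)) * (deriv (deriv a) t / a t)) :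
    ∀ t : ℝ, 0 ≤ t → 0 < 1 + (n:ℝ) * (1 + σ) * H * t / 2 →
      Msq t = m ^ 2 + σ * ((n:ℝ) * H / (2 * c)) ^ 2
        * (1 + (n:ℝ) * (1 + σ) * H * t / 2) ^ (-(2:ℝ)) := by
  intro t _ ht
  have hn₀ : (n:ℝ) ≠ 0 := Nat.cast_ne_zero.mpr (by omega)
  have hat : a t ≠ 0 := by rw [ha t]; split_ifs <;> positivity
  have hderiv : ∀ s, 0 < 1 + (n:ℝ) * (1 + σ) * H * s / 2 →
      HasDerivAt a (hubbleRate (n * (1 + σ)) H s * a s) s := fun s hs => by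
    rw [show a = _ from funext ha]; exact hasDerivAt_flrwScale _ σ H a₀ hn₀ hs
  have hnear : ∀ᶠ s in 𝓝 t, HasDerivAt a (hubbleRate (n * (1 + σ)) H s * a s) s :=
    (continuousAt_const.eventually_lt (g := fun s => 1 + (n:ℝ) * (1 + σ) * H * s / 2)
      (by fun_prop) ht).mono hderiv
  rw [hM t, (hderiv t ht).deriv,
    deriv_deriv_eq_of_hasDerivAt_mul hnear (hasDerivAt_hubbleRate _ H t ht.ne'),
    Real.rpow_neg ht.le, Real.rpow_two]
  unfold hubbleRate
  field_simp
  ring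

/-- The curved mass M² = m² - (n(n-2)/4c²)(ȧ/a)² - (n/2c²)(ä/a) in an FLRW spacetime
equals m² + σ(nH/2c)²(1 + n(1+σ)Ht/2)^{-2}. -/
theorem stmt_6 (n : ℕ) (hn : 1 ≤ n) (m c H σ a₀ : ℝ) (hm : 0 ≤ m) (hc : 0 < c)
    (ha₀ : 0 < a₀) (a Msq : ℝ → ℝ)
    (ha : ∀ t, a t =
      if σ = -1 then a₀ * Real.exp (H * t)
      else a₀ * (1 + (n:ℝ) * (1 + σ) * H * t / 2) ^ (2 / ((n:ℝ) * (1 + σ))))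
    (hM : ∀ t, Msq t = m ^ 2
      - ((n:ℝ) * ((n:ℝ) - 2) / (4 * c ^ 2)) * (deriv a t / a t) ^ 2
      - ((n:ℝ) / (2 * c ^ 2)) * (deriv (deriv a) t / a t)) :
    ∀ t : ℝ, 0 ≤ t → 0 < 1 + (n:ℝ) * (1 + σ) * H * t / 2 →
      Msq t = m ^ 2 + σ * ((n:ℝ) * H / (2 * c)) ^ 2
        * (1 + (n:ℝ) * (1 + σ) * H * t / 2) ^ (-(2:ℝ)) :=
  stmt_6_general n hn m c H σ a₀ hc ha₀ a Msq ha hM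
end

section
/- Let n ≥ 1, m ≥ 0, c > 0, H < 0, σ < 0, (1+σ)H < 0, m > √|σ| n|H|/(2c). Define T₀ = −2/(n(1+σ)H) and T₁ = T₀(1 − √|σ| n|H|/(2cm)). Then 0 < T₁ < T₀ < ∞, the function M²(t) = m² + σ(nH/(2c))²(1 + n(1+σ)Ht/2)^{−2} is strictly decreasing on [0,T₀), M²(T₁) = 0, and M²(t) > 0 for all 0 ≤ t < T₁. -/
/-- In the contracting case H < 0, σ < 0, (1+σ)H < 0 with m > √|σ| n|H|/(2c),
the curved mass M² is strictly decreasing on [0,T₀), vanishes at T₁, and is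
positive on [0,T₁), where T₀ = -2/(n(1+σ)H) and T₁ = T₀(1 - √|σ| n|H|/(2cm)). -/
theorem stmt_10 (n : ℕ) (hn : 1 ≤ n) (m c H σ : ℝ) (hc : 0 < c)
    (hH : H < 0) (hσ : σ < 0) (hσH : (1 + σ) * H < 0)
    (hm : Real.sqrt |σ| * (n:ℝ) * |H| / (2 * c) < m)
    (T₀ T₁ : ℝ)
    (hT₀ : T₀ = -2 / ((n:ℝ) * (1 + σ) * H))
    (hT₁ : T₁ = T₀ * (1 - Real.sqrt |σ| * (n:ℝ) * |H| / (2 * c * m)))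
    (Msq : ℝ → ℝ)
    (hM : ∀ t, Msq t = m ^ 2 + σ * ((n:ℝ) * H / (2 * c)) ^ 2
      * (1 + (n:ℝ) * (1 + σ) * H * t / 2) ^ (-(2:ℝ))) :
    0 < T₁ ∧ T₁ < T₀ ∧
    StrictAntiOn Msq (Set.Ico (0:ℝ) T₀) ∧
    Msq T₁ = 0 ∧
    ∀ t : ℝ, 0 ≤ t → t < T₁ → 0 < Msq t := by
  have hn0 : (0:ℝ) < (n:ℝ) := by exact_mod_cast hn
  set A : ℝ := (n:ℝ) * (1 + σ) * H with hA_def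
  have hA : A < 0 := by
    have h := mul_neg_of_pos_of_neg hn0 hσH
    have : A = (n:ℝ) * ((1 + σ) * H) := by rw [hA_def]; ring
    linarith [this ▸ h]
  have hAne : A ≠ 0 := ne_of_lt hA
  have hT₀pos : 0 < T₀ := by
    rw [hT₀]; exact div_pos_of_neg_of_neg (by norm_num) hA
  have hATo : A * T₀ = -2 := by
    rw [hT₀]; field_simp
  have habsσ : |σ| = -σ := abs_of_neg hσ
  have habsH : |H| = -H := abs_of_neg hH
  have hsqσpos : 0 < Real.sqrt |σ| := Real.sqrt_pos.mpr (by rw [habsσ]; linarith)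
  have hnum : 0 < Real.sqrt |σ| * (n:ℝ) * |H| / (2 * c) := by
    apply div_pos
    · apply mul_pos (mul_pos hsqσpos hn0); rw [habsH]; linarith
    · linarith
  have hmpos : 0 < m := lt_trans hnum hm
  set s : ℝ := Real.sqrt |σ| * (n:ℝ) * |H| / (2 * c * m) with hs_def
  have hs_pos : 0 < s := by
    rw [hs_def]
    apply div_pos
    · apply mul_pos (mul_pos hsqσpos hn0); rw [habsH]; linarith
    · positivity
  have hs_lt1 : s < 1 := by
    rw [hs_def, div_lt_one (by positivity)]
    have := (div_lt_iff₀ (by positivity : (0:ℝ) < 2 * c)).mp hm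
    nlinarith
  have hT₁pos : 0 < T₁ := by
    rw [hT₁]; exact mul_pos hT₀pos (by linarith)
  have hT₁ltT₀ : T₁ < T₀ := by
    rw [hT₁]
    nlinarith
  -- base positivity
  have hbpos : ∀ t : ℝ, t < T₀ → 0 < 1 + A * t / 2 := by
    intro t ht
    have := mul_lt_mul_of_neg_left ht hA
    nlinarith
  have hrpow : ∀ x : ℝ, 0 < x → x ^ (-(2:ℝ)) = (x ^ 2)⁻¹ := by
    intro x hx
    rw [Real.rpow_neg hx.le, ← Real.rpow_natCast x 2]
    norm_num
  have hKneg : (n:ℝ) * H / (2 * c) < 0 :=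
    div_neg_of_neg_of_pos (mul_neg_of_pos_of_neg hn0 hH) (by linarith)
  have hK2 : 0 < ((n:ℝ) * H / (2 * c)) ^ 2 := by
    have := mul_pos_of_neg_of_neg hKneg hKneg
    nlinarith
  have hC : σ * ((n:ℝ) * H / (2 * c)) ^ 2 < 0 := mul_neg_of_neg_of_pos hσ hK2
  have hanti : StrictAntiOn Msq (Set.Ico (0:ℝ) T₀) := by
    intro t₁ ht₁ t₂ ht₂ hlt
    have hb1 : 0 < 1 + A * t₁ / 2 := hbpos t₁ ht₁.2
    have hb2 : 0 < 1 + A * t₂ / 2 := hbpos t₂ ht₂.2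
    have hblt : 1 + A * t₂ / 2 < 1 + A * t₁ / 2 := by
      have := mul_lt_mul_of_neg_left hlt hA
      linarith
    have hsq : (1 + A * t₂ / 2) ^ 2 < (1 + A * t₁ / 2) ^ 2 := by nlinarith
    have hinv : ((1 + A * t₁ / 2) ^ 2)⁻¹ < ((1 + A * t₂ / 2) ^ 2)⁻¹ := by
      apply inv_strictAnti₀ (by positivity) hsq
    rw [hM t₁, hM t₂, hrpow _ hb1, hrpow _ hb2]
    have := mul_lt_mul_of_neg_left hinv hC
    linarith
  have hbT₁ : 1 + A * T₁ / 2 = s := by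
    rw [hT₁, show A * (T₀ * (1 - s)) = A * T₀ * (1 - s) from by ring, hATo]
    ring
  have hMT₁ : Msq T₁ = 0 := by
    rw [hM, hbT₁, hrpow s hs_pos]
    have hs2 : s ^ 2 = (-σ) * ((n:ℝ) * H / (2 * c)) ^ 2 / m ^ 2 := by
      rw [hs_def, div_pow, mul_pow, mul_pow, Real.sq_sqrt (abs_nonneg σ), sq_abs, habsσ]
      field_simp
    rw [hs2, inv_div]
    have hne : -σ * ((n:ℝ) * H / (2 * c)) ^ 2 ≠ 0 := (mul_pos (neg_pos.mpr hσ) hK2).ne'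
    have hd : σ * ((n:ℝ) * H / (2 * c)) ^ 2 * (m ^ 2 / (-σ * ((n:ℝ) * H / (2 * c)) ^ 2)) = -m ^ 2 := by
      rw [mul_div_assoc', div_eq_iff hne]; ring
    rw [hd]; ring
  refine ⟨hT₁pos, hT₁ltT₀, hanti, hMT₁, ?_⟩
  intro t ht0 htT₁
  have h := hanti ⟨ht0, lt_trans htT₁ hT₁ltT₀⟩ ⟨hT₁pos.le, hT₁ltT₀⟩ htT₁
  rw [hMT₁] at h
  exact h
end
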